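/- Let t be an injective transpositional sequence on Fin n that is permutationally complete, with graph G = G(t). Let W ⊆ Fin n be nonempty, regard Fin n as a subset of Fin (n+1), write x for the new vertex of Fin (n+1), and let s be an injective transpositional sequence on Fin (n+1) whose set of terms consists exactly of all terms of t together with the transpositions (x w) for every w ∈ W. Let f be a permutation of Fin (n+1) whose sign equals (−1)^{|s|} (so f is even if s has an even number of terms and odd otherwise). Then f ∈ Prod(s) provided at least one of the following holds: (1) x·f ∈ W; (2) there exist w0 ≠ w1 in W with w0·f = w1; (3) x·f = x and there is a perfect matching of W consisting of transpositions (a b) with a,b ∈ W each occurring as a term of t (a set of pairwise disjoint edges of G within W covering all of W). -/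

import Mathlib

/-- The set of products (compositions, in order) of all rearrangements of `s`. -/
def ProdSet {n : ℕ} (s : List (Equiv.Perm (Fin n))) : Set (Equiv.Perm (Fin n)) :=
  {g | ∃ r : List (Equiv.Perm (Fin n)), r.Perm s ∧ r.prod = g}

/-- `s` is permutationally complete iff `ProdSet s` is the set of even permutations
or the set of odd permutations. -/
def PermComplete {n : ℕ} (s : List (Equiv.Perm (Fin n))) : Prop :=
  ProdSet s = {g | Equiv.Perm.sign g = 1} ∨ ProdSet s = {g | Equiv.Perm.sign g = -1}

/-- `u` is a transpositional sequence: each term is a transposition. -/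
def IsTranspositional {n : ℕ} (u : List (Equiv.Perm (Fin n))) : Prop :=
  ∀ g ∈ u, ∃ x y : Fin n, x ≠ y ∧ g = Equiv.swap x y

/-- The simple graph of a transpositional sequence: an edge `{x,y}` iff `(x y)` occurs in `u`. -/
def TranspGraph {n : ℕ} (u : List (Equiv.Perm (Fin n))) : SimpleGraph (Fin n) where
  Adj x y := x ≠ y ∧ Equiv.swap x y ∈ u
  symm := by
    constructor
    intro x y h
    exact ⟨h.1.symm, by rw [Equiv.swap_comm]; exact h.2⟩
  loopless := by
    constructor
    intro x h
    exact h.1 rfl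

/-- `s` is conjugacy invariant iff all elements of `ProdSet s` are pairwise conjugate. -/
def ConjInv {n : ℕ} (s : List (Equiv.Perm (Fin n))) : Prop :=
  ∀ f ∈ ProdSet s, ∀ g ∈ ProdSet s, IsConj f g

/-!
Up to rearrangement, `s` consists of the star transpositions `(w x)`, `w ∈ W`, and the terms of
`t` acting on `Fin (n + 1)` with `x` fixed. Multiplying the stars over a set `A ⊆ W` in a suitable
order sends `x` to any prescribed point of `A`. In cases (1) and (2) this writes
`f = c * g * d` with `c`, `d` products of stars over a splitting of `W` and `g` fixing `x`;
comparing signs, `g` has the parity of `t`, so it lies in `Prod(t)` by permutational completeness.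
In case (3) `f` itself fixes `x`, `|W|` is even, and for every matching edge `(a b)` the stars are
absorbed by `(a x)(a b)(b x) = (a b)`, inserted around the occurrence of `(a b)` in a
rearrangement of `t`.
-/

open Equiv Equiv.Perm

variable {n : ℕ}

theorem prod_mem_prodSet (l : List (Perm (Fin n))) : l.prod ∈ ProdSet l :=
  ⟨l, .refl l, rfl⟩

theorem List.Perm.prodSet_eq {l l' : List (Equiv.Perm (Fin n))} (h : l.Perm l') :
    ProdSet l = ProdSet l' := by
  ext g
  exact ⟨fun ⟨r, hr, hg⟩ => ⟨r, hr.trans h, hg⟩,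
    fun ⟨r, hr, hg⟩ => ⟨r, hr.trans h.symm, hg⟩⟩

theorem mul_mem_prodSet_append {l₁ l₂ : List (Perm (Fin n))} {a b : Perm (Fin n)}
    (ha : a ∈ ProdSet l₁) (hb : b ∈ ProdSet l₂) : a * b ∈ ProdSet (l₁ ++ l₂) := by
  obtain ⟨r₁, hr₁, rfl⟩ := ha
  obtain ⟨r₂, hr₂, rfl⟩ := hb
  exact ⟨r₁ ++ r₂, hr₁.append hr₂, List.prod_append⟩

theorem map_mem_prodSet_map {m : ℕ} (φ : Perm (Fin n) →* Perm (Fin m))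
    {l : List (Perm (Fin n))} {g : Perm (Fin n)} (hg : g ∈ ProdSet l) :
    φ g ∈ ProdSet (l.map φ) := by
  obtain ⟨r, hr, rfl⟩ := hg
  exact ⟨r.map φ, hr.map φ, (map_list_prod φ r).symm⟩

theorem prodSet_subset_cons_cons {l : List (Perm (Fin n))} {a b y : Perm (Fin n)}
    (hy : y ∈ l) (h : a * y * b = y) : ProdSet l ⊆ ProdSet (a :: b :: l) := by
  rintro _ ⟨r, hr, rfl⟩
  obtain ⟨r₁, r₂, rfl⟩ := List.append_of_mem (hr.mem_iff.2 hy)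
  refine ⟨r₁ ++ a :: y :: b :: r₂, ?_, ?_⟩
  · calc (r₁ ++ a :: y :: b :: r₂).Perm (a :: (r₁ ++ [y] ++ b :: r₂)) := by simp
      List.Perm _ (a :: b :: (r₁ ++ [y] ++ r₂)) := List.perm_middle.cons a
      List.Perm _ (a :: b :: l) := by simpa using (hr.cons b).cons a
  · simp only [List.prod_append, List.prod_cons]
    conv_rhs => rw [← h]
    simp only [mul_assoc]

theorem prodSet_subset_flatMap_append {l : List (Perm (Fin n))}
    (qs : List (Perm (Fin n) × Perm (Fin n)))
    (hqs : ∀ q ∈ qs, ∃ y ∈ l, q.1 * y * q.2 = y) :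
    ProdSet l ⊆ ProdSet (qs.flatMap (fun q => [q.1, q.2]) ++ l) := by
  induction qs with
  | nil => simp
  | cons q qs ih =>
    obtain ⟨y, hy, hq⟩ := hqs q List.mem_cons_self
    exact (ih fun q' hq' => hqs q' (List.mem_cons_of_mem q hq')).trans
      (prodSet_subset_cons_cons (List.mem_append_right _ hy) hq)

theorem sign_of_mem_prodSet {l : List (Perm (Fin n))} (hl : IsTranspositional l)
    {g : Perm (Fin n)} (hg : g ∈ ProdSet l) : sign g = (-1) ^ l.length := by
  obtain ⟨r, hr, rfl⟩ := hg
  rw [← hr.length_eq]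
  exact sign_prod_list_swap fun g hg => hl g (hr.subset hg)

theorem PermComplete.mem_prodSet_of_sign {t : List (Perm (Fin n))} (htpc : PermComplete t)
    (httr : IsTranspositional t) {g : Perm (Fin n)} (hg : sign g = (-1) ^ t.length) :
    g ∈ ProdSet t := by
  have hprod := prod_mem_prodSet t
  have hsign := sign_of_mem_prodSet httr hprod
  rcases htpc with h | h <;> rw [h] at hprod ⊢ <;> exact hg.trans (hsign.symm.trans hprod)

def castSuccPerm : Perm (Fin n) →* Perm (Fin (n + 1)) where
  toFun g := finSuccEquivLast.symm.permCongr g.optionCongr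
  map_one' := by ext; simp
  map_mul' a b := by ext; simp [permCongr_apply]

@[simp]
theorem castSuccPerm_apply_castSucc (g : Perm (Fin n)) (i : Fin n) :
    castSuccPerm g i.castSucc = (g i).castSucc := by
  simp [castSuccPerm, permCongr_apply]

@[simp]
theorem castSuccPerm_apply_last (g : Perm (Fin n)) : castSuccPerm g (Fin.last n) = Fin.last n := by
  simp [castSuccPerm, permCongr_apply]

@[simp]
theorem sign_castSuccPerm (g : Perm (Fin n)) : sign (castSuccPerm g) = sign g := by
  simp [castSuccPerm, sign_permCongr]

theorem castSuccPerm_injective : Function.Injective (castSuccPerm (n := n)) := by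
  intro a b h
  exact Equiv.ext fun i => by simpa using congr($h i.castSucc)

theorem castSuccPerm_swap (a b : Fin n) :
    castSuccPerm (swap a b) = swap a.castSucc b.castSucc := by
  ext i
  cases i using Fin.lastCases with
  | last => simp [swap_apply_of_ne_of_ne, (Fin.castSucc_lt_last _).ne']
  | cast j => simp [(Fin.castSucc_injective n).map_swap]

theorem exists_castSuccPerm_eq {f : Perm (Fin (n + 1))} (hf : f (Fin.last n) = Fin.last n) :
    ∃ g, castSuccPerm g = f := by
  set p := finSuccEquivLast.permCongr f
  have hp : p none = none := by simp [p, permCongr_apply, hf]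
  refine ⟨removeNone p, ?_⟩
  have : (removeNone p).optionCongr = p := by rw [map_equiv_removeNone, hp]; simp; rfl
  ext i
  simp [castSuccPerm, this, p, permCongr_apply]

def swapLast (w : Fin n) : Perm (Fin (n + 1)) := swap w.castSucc (Fin.last n)

@[simp]
theorem swapLast_apply_last (w : Fin n) : swapLast w (Fin.last n) = w.castSucc := by
  simp [swapLast]

@[simp]
theorem swapLast_inv (w : Fin n) : (swapLast w)⁻¹ = swapLast w := swap_inv _ _

theorem swapLast_injective : Function.Injective (swapLast (n := n)) := by
  intro a b h
  simpa using congr($h (Fin.last n))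

theorem swapLast_ne_castSuccPerm (w : Fin n) (g : Perm (Fin n)) :
    swapLast w ≠ castSuccPerm g := by
  intro h
  simpa using congr($h (Fin.last n))

theorem isTranspositional_map_swapLast (L : List (Fin n)) : IsTranspositional (L.map swapLast) := by
  simp only [IsTranspositional, List.mem_map]
  rintro _ ⟨w, -, rfl⟩
  exact ⟨_, _, (Fin.castSucc_lt_last w).ne, rfl⟩

theorem prod_map_swapLast_apply_castSucc {L : List (Fin n)} {v : Fin n} (hv : v ∉ L) :
    (L.map swapLast).prod v.castSucc = v.castSucc := by
  induction L with
  | nil => simp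
  | cons w L ih =>
    rw [List.mem_cons, not_or] at hv
    simp [ih hv.2, swapLast, swap_apply_of_ne_of_ne, hv.1, (Fin.castSucc_lt_last v).ne]

theorem exists_mem_prodSet_map_swapLast_apply_last {L : List (Fin n)} (hL : L.Nodup)
    {v : Fin n} (hv : v ∈ L) :
    ∃ c ∈ ProdSet (L.map swapLast), c (Fin.last n) = v.castSucc := by
  have hperm : (L.erase v ++ [v]).Perm L :=
    (List.perm_append_singleton v _).trans (List.perm_cons_erase hv).symm
  refine ⟨_, (hperm.map swapLast).prodSet_eq ▸ prod_mem_prodSet _, ?_⟩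
  simp [prod_map_swapLast_apply_castSucc hL.not_mem_erase]

theorem swapLast_mul_castSuccPerm_swap_mul_swapLast (a b : Fin n) :
    swapLast a * castSuccPerm (swap a b) * swapLast b = castSuccPerm (swap a b) := by
  have ha := (Fin.castSucc_lt_last a).ne
  have hb := (Fin.castSucc_lt_last b).ne
  ext i
  simp only [castSuccPerm_swap, swapLast, Perm.mul_apply, swap_apply_def]
  split_ifs <;> simp_all

theorem perm_map_swapLast_append_map_castSuccPerm {t : List (Perm (Fin n))}
    (httr : IsTranspositional t) (htnd : t.Nodup) {W : Finset (Fin n)}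
    {s : List (Perm (Fin (n + 1)))} (hsnd : s.Nodup)
    (hterms : ∀ g : Perm (Fin (n + 1)), g ∈ s ↔
      ((∃ a b : Fin n, swap a b ∈ t ∧ g = swap a.castSucc b.castSucc) ∨
       (∃ w ∈ W, g = swap w.castSucc (Fin.last n)))) :
    s.Perm (W.toList.map swapLast ++ t.map castSuccPerm) := by
  have hnd : (W.toList.map swapLast ++ t.map castSuccPerm).Nodup := by
    refine List.nodup_append.2 ⟨W.nodup_toList.map swapLast_injective,
      htnd.map castSuccPerm_injective, ?_⟩
    simp only [List.mem_map]
    rintro _ ⟨w, -, rfl⟩ _ ⟨g, -, rfl⟩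
    exact swapLast_ne_castSuccPerm w g
  refine (List.perm_ext_iff_of_nodup hsnd hnd).2 fun g => ?_
  rw [hterms, List.mem_append, List.mem_map, List.mem_map]
  constructor
  · rintro (⟨a, b, hab, rfl⟩ | ⟨w, hw, rfl⟩)
    · exact .inr ⟨_, hab, castSuccPerm_swap a b⟩
    · exact .inl ⟨w, Finset.mem_toList.2 hw, rfl⟩
  · rintro (⟨w, hw, rfl⟩ | ⟨m, hm, rfl⟩)
    · exact .inr ⟨w, Finset.mem_toList.1 hw, rfl⟩
    · obtain ⟨a, b, -, rfl⟩ := httr m hm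
      exact .inl ⟨a, b, hm, castSuccPerm_swap a b⟩

theorem mem_prodSet_of_apply_inv_last {t : List (Perm (Fin n))} (httr : IsTranspositional t)
    (htpc : PermComplete t) {s : List (Perm (Fin (n + 1)))} {L A B : List (Fin n)}
    (hs : s.Perm (L.map swapLast ++ t.map castSuccPerm)) (hAB : (A ++ B).Perm L)
    {f c d : Perm (Fin (n + 1))} (hsign : sign f = (-1) ^ s.length)
    (hc : c ∈ ProdSet (A.map swapLast)) (hd : d ∈ ProdSet (B.map swapLast))
    (hfix : f (d⁻¹ (Fin.last n)) = c (Fin.last n)) : f ∈ ProdSet s := by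
  obtain ⟨g, hg⟩ := exists_castSuccPerm_eq (f := c⁻¹ * f * d⁻¹) (by
    rw [Perm.mul_apply, Perm.mul_apply, hfix]
    exact c.symm_apply_apply _)
  have hsign_g : sign g = (-1) ^ t.length := by
    rw [← sign_castSuccPerm, hg, map_mul, map_mul, map_inv, map_inv, hsign,
      sign_of_mem_prodSet (isTranspositional_map_swapLast A) hc,
      sign_of_mem_prodSet (isTranspositional_map_swapLast B) hd, hs.length_eq]
    simp only [List.length_append, List.length_map, ← hAB.length_eq, pow_add]
    group
  have hperm : (A.map swapLast ++ t.map castSuccPerm ++ B.map swapLast).Perm s := by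
    have hcomm : (A.map swapLast ++ t.map castSuccPerm ++ B.map swapLast).Perm
        ((A ++ B).map swapLast ++ t.map castSuccPerm) := by
      simpa using List.perm_append_comm.append_left (A.map swapLast)
    exact (hcomm.trans ((hAB.map swapLast).append_right _)).trans hs.symm
  rw [← hperm.prodSet_eq, show f = c * castSuccPerm g * d by rw [hg]; group]
  exact mul_mem_prodSet_append (mul_mem_prodSet_append hc
    (map_mem_prodSet_map _ (htpc.mem_prodSet_of_sign httr hsign_g))) hd

theorem mem_prodSet_of_apply_last_eq_last {t : List (Perm (Fin n))} (httr : IsTranspositional t)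
    (htpc : PermComplete t) {s : List (Perm (Fin (n + 1)))} (P : List (Fin n × Fin n))
    (hP : ∀ p ∈ P, swap p.1 p.2 ∈ t)
    (hs : s.Perm ((P.flatMap fun p => [p.1, p.2]).map swapLast ++ t.map castSuccPerm))
    {f : Perm (Fin (n + 1))} (hsign : sign f = (-1) ^ s.length)
    (hfix : f (Fin.last n) = Fin.last n) : f ∈ ProdSet s := by
  obtain ⟨g, rfl⟩ := exists_castSuccPerm_eq hfix
  have hg : g ∈ ProdSet t := by
    refine htpc.mem_prodSet_of_sign httr ?_
    rw [← sign_castSuccPerm, hsign, hs.length_eq]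
    simp [pow_add, pow_mul]
  have habsorb := prodSet_subset_flatMap_append
    (P.map fun p => (swapLast p.1, swapLast p.2)) (l := t.map castSuccPerm) (by
      simp only [List.mem_map, Prod.exists]
      rintro _ ⟨a, b, hab, rfl⟩
      exact ⟨_, ⟨_, hP _ hab, rfl⟩, swapLast_mul_castSuccPerm_swap_mul_swapLast a b⟩)
  rw [hs.prodSet_eq]
  simpa [List.flatMap_map, List.map_flatMap] using habsorb (map_mem_prodSet_map _ hg)

theorem exists_pairs_of_perfectMatching {α : Type*} [DecidableEq α] [Fintype α]
    {t : List (Perm α)} {W : Finset α} {M : Finset (Perm α)}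
    (hM : ∀ m ∈ M, ∃ a b : α, a ∈ W ∧ b ∈ W ∧ a ≠ b ∧ m = swap a b ∧ m ∈ t)
    (hcover : ∀ w ∈ W, ∃ m ∈ M, w ∈ m.support)
    (hdisj : ∀ m₁ ∈ M, ∀ m₂ ∈ M, m₁ ≠ m₂ → Disjoint m₁.support m₂.support) :
    ∃ P : List (α × α), (P.flatMap fun p => [p.1, p.2]).Perm W.toList ∧
      ∀ p ∈ P, swap p.1 p.2 ∈ t := by
  choose a b ha hb hab heq ht using hM
  have hsupp : ∀ m (hm : m ∈ M), m.support = {a m hm, b m hm} := fun m hm => by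
    conv_lhs => rw [heq m hm]
    exact support_swap (hab m hm)
  refine ⟨M.attach.toList.map fun m => (a m.1 m.2, b m.1 m.2), ?_, ?_⟩
  · simp only [List.flatMap_map]
    have hnd : (M.attach.toList.flatMap fun m => [a m.1 m.2, b m.1 m.2]).Nodup := by
      refine List.nodup_flatMap.2 ⟨fun m _ => by simp [hab], ?_⟩
      refine M.attach.nodup_toList.pairwise_of_forall_ne fun m₁ _ m₂ _ hne => ?_
      have := hdisj _ m₁.2 _ m₂.2 (Subtype.coe_injective.ne hne)
      rw [hsupp, hsupp] at this
      simpa [Function.onFun] using this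
    refine (List.perm_ext_iff_of_nodup hnd W.nodup_toList).2 fun w => ?_
    simp only [List.mem_flatMap, Finset.mem_toList, Finset.mem_attach, true_and,
      List.mem_cons, List.not_mem_nil, or_false, Subtype.exists]
    constructor
    · rintro ⟨m, hm, rfl | rfl⟩
      exacts [ha m hm, hb m hm]
    · intro hw
      obtain ⟨m, hm, hwm⟩ := hcover w hw
      rw [hsupp m hm] at hwm
      exact ⟨m, hm, by simpa using hwm⟩
  · simp only [List.mem_map, Finset.mem_toList, Finset.mem_attach, true_and]
    rintro _ ⟨⟨m, hm⟩, rfl⟩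
    exact heq m hm ▸ ht m hm

theorem stmt_5_general (n : ℕ) (t : List (Equiv.Perm (Fin n)))
    (httr : IsTranspositional t) (htnd : t.Nodup) (htpc : PermComplete t)
    (W : Finset (Fin n))
    (s : List (Equiv.Perm (Fin (n + 1))))
    (hsnd : s.Nodup)
    (hterms : ∀ g : Equiv.Perm (Fin (n + 1)), g ∈ s ↔
      ((∃ a b : Fin n, Equiv.swap a b ∈ t ∧
          g = Equiv.swap (Fin.castSucc a) (Fin.castSucc b)) ∨
       (∃ w ∈ W, g = Equiv.swap (Fin.castSucc w) (Fin.last n))))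
    (f : Equiv.Perm (Fin (n + 1)))
    (hsign : Equiv.Perm.sign f = (-1 : ℤˣ) ^ s.length)
    (hcond :
      (∃ w ∈ W, f (Fin.last n) = Fin.castSucc w) ∨
      (∃ w0 ∈ W, ∃ w1 ∈ W, w0 ≠ w1 ∧ f (Fin.castSucc w0) = Fin.castSucc w1) ∨
      (f (Fin.last n) = Fin.last n ∧
        ∃ M : Finset (Equiv.Perm (Fin n)),
          (∀ m ∈ M, ∃ a b : Fin n, a ∈ W ∧ b ∈ W ∧ a ≠ b ∧
            m = Equiv.swap a b ∧ m ∈ t) ∧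
          (∀ w ∈ W, ∃ m ∈ M, w ∈ m.support) ∧
          (∀ m1 ∈ M, ∀ m2 ∈ M, m1 ≠ m2 → Disjoint m1.support m2.support))) :
    f ∈ ProdSet s := by
  have hs := perm_map_swapLast_append_map_castSuccPerm httr htnd hsnd hterms
  rcases hcond with ⟨w₀, hw₀, hf⟩ | ⟨w₀, hw₀, w₁, hw₁, hne, hf⟩ |
    ⟨hfix, M, hM, hcover, hdisj⟩
  · obtain ⟨c, hc, hcx⟩ :=
      exists_mem_prodSet_map_swapLast_apply_last W.nodup_toList (Finset.mem_toList.2 hw₀)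
    exact mem_prodSet_of_apply_inv_last httr htpc hs (B := []) (by simp) hsign hc
      (prod_mem_prodSet []) (by simpa [hcx] using hf)
  · have hw₀' := Finset.mem_toList.2 hw₀
    obtain ⟨c, hc, hcx⟩ := exists_mem_prodSet_map_swapLast_apply_last
      (W.nodup_toList.erase w₀) ((List.mem_erase_of_ne hne.symm).2 (Finset.mem_toList.2 hw₁))
    exact mem_prodSet_of_apply_inv_last httr htpc hs
      ((List.perm_append_singleton _ _).trans (List.perm_cons_erase hw₀').symm) hsign hc
      (by simpa using prod_mem_prodSet [swapLast w₀]) (by simpa [hcx] using hf)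
  · obtain ⟨P, hP, hPt⟩ := exists_pairs_of_perfectMatching hM hcover hdisj
    exact mem_prodSet_of_apply_last_eq_last httr htpc P hPt
      (hs.trans ((hP.map swapLast).symm.append_right _)) hsign hfix

theorem stmt_5 (n : ℕ) (t : List (Equiv.Perm (Fin n)))
    (httr : IsTranspositional t) (htnd : t.Nodup) (htpc : PermComplete t)
    (W : Finset (Fin n)) (hW : W.Nonempty)
    (s : List (Equiv.Perm (Fin (n + 1))))
    (hstr : IsTranspositional s) (hsnd : s.Nodup)
    (hterms : ∀ g : Equiv.Perm (Fin (n + 1)), g ∈ s ↔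
      ((∃ a b : Fin n, Equiv.swap a b ∈ t ∧
          g = Equiv.swap (Fin.castSucc a) (Fin.castSucc b)) ∨
       (∃ w ∈ W, g = Equiv.swap (Fin.castSucc w) (Fin.last n))))
    (f : Equiv.Perm (Fin (n + 1)))
    (hsign : Equiv.Perm.sign f = (-1 : ℤˣ) ^ s.length)
    (hcond :
      (∃ w ∈ W, f (Fin.last n) = Fin.castSucc w) ∨
      (∃ w0 ∈ W, ∃ w1 ∈ W, w0 ≠ w1 ∧ f (Fin.castSucc w0) = Fin.castSucc w1) ∨
      (f (Fin.last n) = Fin.last n ∧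
        ∃ M : Finset (Equiv.Perm (Fin n)),
          (∀ m ∈ M, ∃ a b : Fin n, a ∈ W ∧ b ∈ W ∧ a ≠ b ∧
            m = Equiv.swap a b ∧ m ∈ t) ∧
          (∀ w ∈ W, ∃ m ∈ M, w ∈ m.support) ∧
          (∀ m1 ∈ M, ∀ m2 ∈ M, m1 ≠ m2 → Disjoint m1.support m2.support))) :
    f ∈ ProdSet s :=
  stmt_5_general n t httr htnd htpc W s hsnd hterms f hsign hcond
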